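/- arXiv:1708.08103 — 4 statements merged into one kernel-verified Lean document; each statement's English description precedes it below -/
import Mathlib

section
/- Let μ ∈ P_H(X) have infinite support and nonincreasing probability mass function f_μ(1) ≥ f_μ(2) ≥ ⋯. For θ > 0 define the probability measure μ̃_θ by μ̃_θ({i}) = min{θ, f_μ(i)} for i > 1 and μ̃_θ({1}) = 1 − κ_θ, where κ_θ = Σ_{i>1} min{θ, f_μ(i)}. Then lim_{θ→0⁺} H(μ̃_θ) = 0. -/
open scoped ENNReal
open Filter
open scoped Classical

/- The countably infinite alphabet `X` (the positive integers) is encoded as `ℕ`,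
   with `i : ℕ` standing for the positive integer `i + 1`. -/

/-- A probability mass function on a countable alphabet `S`. -/
structure PMass (S : Type*) where
  p : S → ℝ
  nonneg : ∀ x, 0 ≤ p x
  sum_one : HasSum p 1

/-- Total mass that a nonnegative weight function `p` assigns to a set `A`. -/
noncomputable def setMass {S : Type*} (p : S → ℝ) (A : Set S) : ℝ :=
  ∑' x, A.indicator p x

/-- Probability of the block `x` under the `n`-fold product measure `μ^n`. -/
noncomputable def blockP {S : Type*} (n : ℕ) (μ : PMass S) (x : Fin n → S) : ℝ :=
  ∏ i, μ.p (x i)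

/-- Shannon entropy (base 2, valued in `ℝ≥0∞`) of a mass function. -/
noncomputable def entropyF {S : Type*} (p : S → ℝ) : ℝ≥0∞ :=
  ∑' x, ENNReal.ofReal (-(p x * Real.logb 2 (p x)))

/-- Shannon entropy of `μ`; membership `μ ∈ P_H(X)` is expressed as `entropy μ ≠ ⊤`. -/
noncomputable def entropy {S : Type*} (μ : PMass S) : ℝ≥0∞ := entropyF μ.p

/-- Prefix-free code: the codewords of distinct symbols are never prefixes of one another. -/
def PrefixFreeCode {A : Type*} (C : A → List Bool) : Prop :=
  ∀ a b, a ≠ b → ¬ C a <+: C b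

/-- A variable-length lossy code `(f_n, g_n)` of block-length `n`. -/
structure LossyCode (n : ℕ) where
  enc : (Fin n → ℕ) → List Bool
  dec : List Bool → (Fin n → ℕ)
  prefix_free : PrefixFreeCode enc

/-- Average per-letter (Hamming) distortion `d(f_n, g_n, μ^n)`. -/
noncomputable def distortion (n : ℕ) (c : LossyCode n) (μ : PMass ℕ) : ℝ :=
  ∑' x : Fin n → ℕ, blockP n μ x *
    (((Finset.univ.filter fun i => x i ≠ c.dec (c.enc x) i).card : ℝ) / n)

/-- Rate (bits per sample) `r(f_n, μ^n)`, valued in `ℝ≥0∞`. -/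
noncomputable def rate (n : ℕ) (c : LossyCode n) (μ : PMass ℕ) : ℝ≥0∞ :=
  (∑' x : Fin n → ℕ, ENNReal.ofReal (blockP n μ x) * ((c.enc x).length : ℝ≥0∞)) / n

/-- `R` is an achievable rate for almost lossless coding of the memoryless source `μ`. -/
def AchievableRate (μ : PMass ℕ) (R : ℝ) : Prop :=
  0 < R ∧ ∃ c : (n : ℕ) → LossyCode n,
    Filter.limsup (fun n => rate n (c n) μ) Filter.atTop ≤ ENNReal.ofReal R ∧
    Filter.Tendsto (fun n => distortion n (c n) μ) Filter.atTop (nhds 0)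

/-- Minimum achievable rate `R_al(μ)`. -/
noncomputable def Ral (μ : PMass ℕ) : ℝ := sInf {R | AchievableRate μ R}

/-- A two-stage lossy code of block-length `n` and size `k`: a symbol-by-symbol quantizer,
a reconstruction map picking a prototype inside each cell, and a prefix-free encoder. -/
structure TwoStageCode (n k : ℕ) where
  quant : ℕ → Fin k
  recon : Fin k → ℕ
  recon_mem : ∀ i, quant (recon i) = i
  enc : (Fin n → Fin k) → List Bool
  prefix_free : PrefixFreeCode enc

/-- Distortion `d(φ_n, ψ_n, μ^n)` of a two-stage code. -/
noncomputable def distortion2 {n k : ℕ} (c : TwoStageCode n k) (μ : PMass ℕ) : ℝ :=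
  ∑' x : Fin n → ℕ, blockP n μ x *
    (((Finset.univ.filter fun i => x i ≠ c.recon (c.quant (x i))).card : ℝ) / n)

/-- Rate `r(φ_n, C_n, μ^n)` of a two-stage code. -/
noncomputable def rate2 {n k : ℕ} (c : TwoStageCode n k) (μ : PMass ℕ) : ℝ≥0∞ :=
  (∑' x : Fin n → ℕ,
    ENNReal.ofReal (blockP n μ x) * (((c.enc (fun i => c.quant (x i))).length : ℕ) : ℝ≥0∞)) / n

/-- Cell of the partition induced by the quantizer `q` containing `x`. -/
def qcell {I : Type*} (q : ℕ → I) (x : ℕ) : Set ℕ := {y | q y = q x}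

/-- The sequence of partitions induced by the quantizers `q n` is asymptotically
sufficient for `μ`: for every `x` in the support, `μ(⋃_{m ≥ n} π_m(x) \ {x}) → 0`. -/
def AsympSufficient {I : ℕ → Type*} (q : ∀ n, ℕ → I n) (μ : PMass ℕ) : Prop :=
  ∀ x, μ.p x ≠ 0 →
    Filter.Tendsto (fun n => setMass μ.p ((⋃ m ∈ Set.Ici n, qcell (q m) x) \ {x}))
      Filter.atTop (nhds 0)

/-- Entropy of `p` restricted to the σ-field generated by the partition induced by `Q`. -/
noncomputable def entropyPartF {S I : Type*} (Q : S → I) (p : S → ℝ) : ℝ≥0∞ :=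
  ∑' i : I, ENNReal.ofReal (-(setMass p (Q ⁻¹' {i}) * Real.logb 2 (setMass p (Q ⁻¹' {i}))))

/-- KL divergence (base 2, valued in `ℝ≥0∞`) between the restrictions of `p` and `q` to the
σ-field generated by the partition induced by `Q`; it equals `⊤` unless the restriction of
`p` is absolutely continuous w.r.t. that of `q` with a summable defining series. -/
noncomputable def divPart {S I : Type*} (Q : S → I) (p q : S → ℝ) : ℝ≥0∞ :=
  if (∀ i, setMass q (Q ⁻¹' {i}) = 0 → setMass p (Q ⁻¹' {i}) = 0)
      ∧ Summable (fun i => setMass p (Q ⁻¹' {i}) *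
          Real.logb 2 (setMass p (Q ⁻¹' {i}) / setMass q (Q ⁻¹' {i})))
  then ENNReal.ofReal (∑' i, setMass p (Q ⁻¹' {i}) *
          Real.logb 2 (setMass p (Q ⁻¹' {i}) / setMass q (Q ⁻¹' {i})))
  else ⊤

/-- `n`-fold product quantizer. -/
def prodQ {I : Type*} (n : ℕ) (q : ℕ → I) : (Fin n → ℕ) → Fin n → I :=
  fun x i => q (x i)

/-- Information radius `R⁺(Λ^n, σ(π))` of `Λ^n` restricted to the product σ-field of the
partition induced by the quantizer `q`. -/
noncomputable def infoRadPart (Λ : Set (PMass ℕ)) {I : Type*} (q : ℕ → I) (n : ℕ) : ℝ≥0∞ :=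
  ⨅ ν : PMass (Fin n → ℕ), ⨆ μ ∈ Λ, divPart (prodQ n q) (blockP n μ) ν.p

/-- Unrestricted information radius `R⁺(Λ^n)`. -/
noncomputable def infoRadFull (Λ : Set (PMass ℕ)) (n : ℕ) : ℝ≥0∞ :=
  ⨅ ν : PMass (Fin n → ℕ), ⨆ μ ∈ Λ, divPart id (blockP n μ) ν.p

/-- `Λ` admits an almost lossless universal source coding scheme: pointwise vanishing
distortion together with vanishing worst-case redundancy. -/
def AdmitsALUSC (Λ : Set (PMass ℕ)) : Prop :=
  ∃ c : (n : ℕ) → LossyCode n,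
    (∀ μ ∈ Λ, Filter.Tendsto (fun n => distortion n (c n) μ) Filter.atTop (nhds 0)) ∧
    Filter.Tendsto (fun n => ⨆ μ ∈ Λ, ((rate n (c n) μ : EReal) - (entropy μ : EReal)))
      Filter.atTop (nhds 0)

/-- The envelope family `Λ_f`. -/
def Lambda (f : ℕ → ℝ) : Set (PMass ℕ) := {μ | ∀ x, μ.p x ≤ f x}

/-- Hellinger distance. -/
noncomputable def hellinger {S : Type*} (μ ν : PMass S) : ℝ :=
  Real.sqrt (∑' x, (Real.sqrt (μ.p x) - Real.sqrt (ν.p x)) ^ 2)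

/-- Smallest cardinality (in `ℝ≥0∞`) of a finite partition of `Λ` into cells of Hellinger
diameter at most `ε`; equals `⊤` if no such finite partition exists. -/
noncomputable def coverNum (Λ : Set (PMass ℕ)) (ε : ℝ) : ℝ≥0∞ :=
  sInf {N : ℝ≥0∞ | ∃ (m : ℕ) (P : Fin m → Set (PMass ℕ)), N = (m : ℝ≥0∞) ∧
    (⋃ i, P i) = Λ ∧ (Pairwise fun i j => Disjoint (P i) (P j)) ∧
    ∀ i, ∀ μ ∈ P i, ∀ ν ∈ P i, hellinger μ ν ≤ ε}

/-- Metric entropy `H_ε(Λ) = ln D_ε(Λ)`, valued in `ℝ≥0∞`. -/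
noncomputable def metricEntropy (Λ : Set (PMass ℕ)) (ε : ℝ) : ℝ≥0∞ :=
  if coverNum Λ ε = ⊤ then ⊤ else ENNReal.ofReal (Real.log (coverNum Λ ε).toReal)

/-- `tailSum f m = Σ_{i ≥ m} f i`; in paper units this is `Σ_{j ≥ m+1} f(j)`. -/
noncomputable def tailSum (f : ℕ → ℝ) (m : ℕ) : ℝ := ∑' i, if m ≤ i then f i else 0

/-- `l_f − 1`: the paper's `l_f = max{k : Σ_{j ≥ k} f(j) ≥ 1}` in the ℕ-encoding. -/
noncomputable def lfN (f : ℕ → ℝ) : ℕ := sSup {m : ℕ | 1 ≤ tailSum f m}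

/-- The envelope probability mass function `μ_f`. -/
noncomputable def envPMF (f : ℕ → ℝ) : ℕ → ℝ := fun i =>
  if i < lfN f then 0 else if i = lfN f then 1 - tailSum f (lfN f + 1) else f i

/-- Tail function `F̄_f(u) = 1 − μ_f({1,…,u})`, with `u` in paper units. -/
noncomputable def Fbar (f : ℕ → ℝ) (u : ℕ) : ℝ := tailSum (envPMF f) u

/-- The `1/n`-quantile `u*_f(n) = min {u ≥ 1 : F̄_f(u) < 1/n}` (paper units). -/
noncomputable def ustar (f : ℕ → ℝ) (n : ℕ) : ℕ :=
  sInf {u : ℕ | 1 ≤ u ∧ Fbar f u < 1 / (n : ℝ)}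

/-- Quantizer inducing the tail partition `π̃_k = {{1},…,{k−1},{k,k+1,…}}` (paper units):
the `k − 1` smallest letters form singleton cells and the rest is one tail cell. -/
def qTail (k : ℕ) : ℕ → ℕ := fun x => min x (k - 1)

/-- Truncated envelope `f̃_k`: `f̃_k(i) = f(i)` for `1 ≤ i ≤ k−1`,
`f̃_k(k) = min (Σ_{l ≥ k} f(l)) 1`, `f̃_k(i) = 0` for `i > k` (paper units). -/
noncomputable def ftrunc (f : ℕ → ℝ) (k : ℕ) : ℕ → ℝ := fun i =>
  if i < k - 1 then f i else if i = k - 1 then min (tailSum f (k - 1)) 1 else 0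

/-- Hazard function `h_f(u) = −ln F̄_f(u)` (paper units). -/
noncomputable def hazard (f : ℕ → ℝ) (u : ℕ) : ℝ := -Real.log (Fbar f u)

/-- Piecewise-linear interpolation `h̃_f` of the hazard function. -/
noncomputable def hazardTilde (f : ℕ → ℝ) (x : ℝ) : ℝ :=
  ((⌊x⌋₊ : ℝ) + 1 - x) * hazard f ⌊x⌋₊ + (x - (⌊x⌋₊ : ℝ)) * hazard f (⌊x⌋₊ + 1)

/-- Smoothed envelope distribution `F_f(x) = 1 − e^{−h̃_f(x)}`. -/
noncomputable def smoothedF (f : ℕ → ℝ) (x : ℝ) : ℝ := 1 - Real.exp (-hazardTilde f x)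

/-- `U_f(t) = inf {x ≥ 1 : F_f(x) ≥ 1 − 1/t}`. -/
noncomputable def Uf (f : ℕ → ℝ) (t : ℝ) : ℝ :=
  sInf {x : ℝ | 1 ≤ x ∧ 1 - 1 / t ≤ smoothedF f x}

/-- `Lfun f t = ∫_1^{t²} U_f(x)/(2x) dx`, so that `l(1/ε) = Lfun f (1/ε)` and
`l(√n) = Lfun f (√n) = ∫_1^n U_f(x)/(2x) dx`. -/
noncomputable def Lfun (f : ℕ → ℝ) (t : ℝ) : ℝ :=
  ∫ x in (1:ℝ)..(t ^ 2), Uf f x / (2 * x)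

/-- The measure `μ̃_θ`: `μ̃_θ({i}) = min {θ, f_μ(i)}` for every letter `i` other than the
first one (encoded as `0 : ℕ`), and `μ̃_θ({1}) = 1 − κ_θ` where
`κ_θ = Σ_{i > 1} min {θ, f_μ(i)}`. -/
noncomputable def mutilde (μ : PMass ℕ) (θ : ℝ) : ℕ → ℝ := fun i =>
  if i = 0 then 1 - ∑' j : ℕ, (if j = 0 then 0 else min θ (μ.p j))
  else min θ (μ.p i)

/-- Auxiliary: `negMulLog` is monotone on `[0, e⁻¹]`. -/
lemma negMulLog_mono_aux {a b : ℝ} (ha : 0 ≤ a) (hab : a ≤ b) (hb : b ≤ Real.exp (-1)) :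
    Real.negMulLog a ≤ Real.negMulLog b := by
  have hmono : MonotoneOn Real.negMulLog (Set.Icc 0 (Real.exp (-1))) := by
    apply monotoneOn_of_deriv_nonneg (convex_Icc _ _) Real.continuous_negMulLog.continuousOn
    · intro x hx
      rw [interior_Icc] at hx
      exact (Real.differentiableAt_negMulLog hx.1.ne').differentiableWithinAt
    · intro x hx
      rw [interior_Icc] at hx
      rw [Real.deriv_negMulLog hx.1.ne']
      have hlog : Real.log x ≤ -1 := by
        calc Real.log x ≤ Real.log (Real.exp (-1)) :=
              Real.log_le_log (by exact hx.1) hx.2.le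
          _ = -1 := Real.log_exp _
      linarith
  exact hmono ⟨ha, hab.trans hb⟩ ⟨ha.trans hab, hb⟩ hab

lemma key_phi (q : ℝ) : -(q * Real.logb 2 q) = Real.negMulLog q / Real.log 2 := by
  rw [Real.logb, Real.negMulLog]; ring

/-- Auxiliary: the mass `κ_θ` tends to `0` as `θ → 0⁺`. -/
lemma kappa_tendsto (μ : PMass ℕ) :
    Filter.Tendsto (fun θ : ℝ => ∑' j : ℕ, (if j = 0 then 0 else min θ (μ.p j)))
      (nhdsWithin (0 : ℝ) (Set.Ioi 0)) (nhds 0) := by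
  have h := tendsto_tsum_of_dominated_convergence
      (f := fun (θ : ℝ) (j : ℕ) => if j = 0 then 0 else min θ (μ.p j))
      (g := fun _ : ℕ => (0 : ℝ)) (bound := μ.p) (𝓕 := nhdsWithin (0 : ℝ) (Set.Ioi 0))
      μ.sum_one.summable ?_ ?_
  · simpa using h
  · intro k
    by_cases hk : k = 0
    · simp [hk]
    · simp only [hk, if_false]
      have : Filter.Tendsto (fun θ : ℝ => min θ (μ.p k)) (nhds 0) (nhds (min 0 (μ.p k))) :=
        ((continuous_id.min continuous_const).tendsto 0)
      rw [min_eq_left (μ.nonneg k)] at this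
      exact this.mono_left nhdsWithin_le_nhds
  · filter_upwards [self_mem_nhdsWithin] with θ (hθ : (0:ℝ) < θ)
    intro k
    by_cases hk : k = 0
    · simp [hk, μ.nonneg 0]
    · simp only [hk, if_false]
      rw [Real.norm_eq_abs, abs_of_nonneg (le_min hθ.le (μ.nonneg k))]
      exact min_le_right _ _

/-- if `μ ∈ P_H(X)` has infinite support and nonincreasing pmf, then
`H(μ̃_θ) → 0` as `θ → 0⁺`. -/
theorem statement_1 (μ : PMass ℕ) (hH : entropy μ ≠ ⊤)
    (hsupp : {x | μ.p x ≠ 0}.Infinite) (hmono : Antitone μ.p) :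
    Filter.Tendsto (fun θ => entropyF (mutilde μ θ))
      (nhdsWithin (0 : ℝ) (Set.Ioi 0)) (nhds 0) := by
  have hp0 : ∀ i, 0 ≤ μ.p i := μ.nonneg
  have hlog2 : (0:ℝ) < Real.log 2 := Real.log_pos one_lt_two
  set f : ℕ → ℝ≥0∞ := fun i => ENNReal.ofReal (-(μ.p i * Real.logb 2 (μ.p i))) with hf
  have hHf : ∑' i, f i ≠ ⊤ := hH
  rw [ENNReal.tendsto_nhds_zero]
  intro ε hε
  have hεhalf : (0:ℝ≥0∞) < ε / 2 := ENNReal.half_pos hε.ne'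
  -- tail of the entropy series is eventually small
  have htail := ENNReal.tendsto_sum_nat_add f hHf
  have h1 : ∀ᶠ n in atTop, (∑' k, f (k + n)) < ε / 2 := htail.eventually_lt_const hεhalf
  -- `μ.p i` is eventually below `e⁻¹`
  have hptend : Filter.Tendsto μ.p atTop (nhds 0) := μ.sum_one.summable.tendsto_atTop_zero
  obtain ⟨M, hM⟩ := Filter.eventually_atTop.1
    (hptend.eventually_lt_const (Real.exp_pos (-1)))
  obtain ⟨N, hN1, hN2, hN3⟩ :=
    (h1.and ((Filter.eventually_ge_atTop M).and (Filter.eventually_ge_atTop 1))).exists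
  -- head sum tends to 0
  set g : ℝ → ℕ → ℝ≥0∞ := fun θ i =>
    ENNReal.ofReal (-(mutilde μ θ i * Real.logb 2 (mutilde μ θ i))) with hg
  have hterm : ∀ i, Filter.Tendsto (fun θ => g θ i)
      (nhdsWithin (0 : ℝ) (Set.Ioi 0)) (nhds 0) := by
    intro i
    have hq : Filter.Tendsto (fun θ => mutilde μ θ i)
        (nhdsWithin (0 : ℝ) (Set.Ioi 0)) (nhds (if i = 0 then 1 else 0)) := by
      by_cases hi : i = 0
      · simp only [mutilde, hi, if_true]
        have := (kappa_tendsto μ).const_sub 1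
        simpa using this
      · simp only [mutilde, hi, if_false]
        have : Filter.Tendsto (fun θ : ℝ => min θ (μ.p i)) (nhds 0) (nhds (min 0 (μ.p i))) :=
          ((continuous_id.min continuous_const).tendsto 0)
        rw [min_eq_left (hp0 i)] at this
        exact this.mono_left nhdsWithin_le_nhds
    have hcont : Filter.Tendsto (fun θ => -(mutilde μ θ i * Real.logb 2 (mutilde μ θ i)))
        (nhdsWithin (0 : ℝ) (Set.Ioi 0)) (nhds 0) := by
      simp only [key_phi]
      have := ((Real.continuous_negMulLog.tendsto _).comp hq).div_const (Real.log 2)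
      by_cases hi : i = 0 <;> simp [hi] at this ⊢ <;> exact this
    have := (ENNReal.continuous_ofReal.tendsto 0).comp hcont
    rw [ENNReal.ofReal_zero] at this
    exact this
  have hhead : Filter.Tendsto (fun θ => ∑ i ∈ Finset.range N, g θ i)
      (nhdsWithin (0 : ℝ) (Set.Ioi 0)) (nhds 0) := by
    have := tendsto_finset_sum (Finset.range N) (fun i _ => hterm i)
    simpa using this
  filter_upwards [hhead.eventually_lt_const hεhalf, self_mem_nhdsWithin]
    with θ hhd (hθ : (0:ℝ) < θ)
  -- split the entropy into head and tail
  have hsplit : entropyF (mutilde μ θ)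
      = (∑ i ∈ Finset.range N, g θ i) + ∑' k, g θ (k + N) := by
    rw [entropyF]
    exact (Summable.sum_add_tsum_nat_add' (k := N) ENNReal.summable).symm
  have htailb : (∑' k, g θ (k + N)) ≤ ∑' k, f (k + N) := by
    refine ENNReal.tsum_le_tsum fun k => ?_
    have hkN : k + N ≠ 0 := by have := hN3; omega
    have hkN' : 1 ≤ N := hN3
    have hMk : M ≤ k + N := le_trans hN2 (Nat.le_add_left N k)
    have hs : μ.p (k + N) ≤ Real.exp (-1) := (hM _ hMk).le
    have ht0 : 0 ≤ min θ (μ.p (k + N)) := le_min hθ.le (hp0 _)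
    have hts : min θ (μ.p (k + N)) ≤ μ.p (k + N) := min_le_right _ _
    have hmle : Real.negMulLog (min θ (μ.p (k + N))) ≤ Real.negMulLog (μ.p (k + N)) :=
      negMulLog_mono_aux ht0 hts hs
    apply ENNReal.ofReal_le_ofReal
    simp only [hg, hf, mutilde, hkN, if_false, key_phi]
    exact div_le_div_of_nonneg_right hmle hlog2.le |>.trans_eq rfl
  calc entropyF (mutilde μ θ) = (∑ i ∈ Finset.range N, g θ i) + ∑' k, g θ (k + N) := hsplit
    _ ≤ ε / 2 + ε / 2 := add_le_add hhd.le (htailb.trans hN1.le)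
    _ = ε := ENNReal.add_halves ε
end

section
/- If a sequence of partitions {π_n}_{n≥1} of X is asymptotically sufficient for μ ∈ P_H(X), then lim_{n→∞} H_{σ(π_n)}(μ) = H(μ). -/
open scoped ENNReal
open Filter
open scoped Classical

section AuxStatement3

private lemma summable_p (μ : PMass ℕ) : Summable μ.p := ⟨1, μ.sum_one⟩

private lemma summable_ind (μ : PMass ℕ) (A : Set ℕ) : Summable (A.indicator μ.p) :=
  (summable_p μ).indicator A

private lemma ind_nonneg (μ : PMass ℕ) (A : Set ℕ) (x : ℕ) : 0 ≤ A.indicator μ.p x :=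
  Set.indicator_nonneg (fun y _ => μ.nonneg y) x

private lemma setMass_nonneg (μ : PMass ℕ) (A : Set ℕ) : 0 ≤ setMass μ.p A :=
  tsum_nonneg (ind_nonneg μ A)

private lemma setMass_mono (μ : PMass ℕ) {A B : Set ℕ} (h : A ⊆ B) :
    setMass μ.p A ≤ setMass μ.p B :=
  Summable.tsum_le_tsum (fun x => Set.indicator_le_indicator_of_subset h (fun y => μ.nonneg y) x)
    (summable_ind μ A) (summable_ind μ B)

private lemma setMass_le_one (μ : PMass ℕ) (A : Set ℕ) : setMass μ.p A ≤ 1 := by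
  have h := Summable.tsum_le_tsum (fun x => Set.indicator_le_self' (fun y _ => μ.nonneg y) x)
    (summable_ind μ A) (summable_p μ)
  simpa [setMass, μ.sum_one.tsum_eq] using h

private lemma le_setMass (μ : PMass ℕ) {A : Set ℕ} {y : ℕ} (hy : y ∈ A) :
    μ.p y ≤ setMass μ.p A := by
  have := Summable.le_tsum (summable_ind μ A) y (fun b _ => ind_nonneg μ A b)
  simpa [setMass, Set.indicator_of_mem hy] using this

private lemma setMass_split (μ : PMass ℕ) {A : Set ℕ} {x : ℕ} (hx : x ∈ A) :
    setMass μ.p A = μ.p x + setMass μ.p (A \ {x}) := by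
  have hfun : A.indicator μ.p = ({x} : Set ℕ).indicator μ.p + (A \ {x}).indicator μ.p := by
    funext y
    by_cases hyx : y = x
    · subst hyx; simp [Set.indicator, hx]
    · simp [Set.indicator, hyx]
  have hsing : ∑' y, ({x} : Set ℕ).indicator μ.p y = μ.p x := by
    rw [tsum_eq_single x]
    · simp
    · intro b hb; simp [Set.indicator, hb]
  unfold setMass
  rw [hfun]
  simp only [Pi.add_apply]
  rw [Summable.tsum_add (summable_ind μ {x}) (summable_ind μ (A \ {x})), hsing]

private lemma mem_qcell_self (Q : ℕ → ℕ) (x : ℕ) : x ∈ qcell Q x := rfl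

private lemma qcell_eq_preimage (Q : ℕ → ℕ) (x : ℕ) : qcell Q x = Q ⁻¹' {Q x} := by
  ext y; simp [qcell]

/-- Cell masses tend to the point mass. -/
private lemma cellMass_tendsto (μ : PMass ℕ) (q : ℕ → ℕ → ℕ) (hsuff : AsympSufficient q μ)
    {x : ℕ} (hx : μ.p x ≠ 0) :
    Filter.Tendsto (fun n => setMass μ.p (qcell (q n) x)) Filter.atTop (nhds (μ.p x)) := by
  have hδ : Filter.Tendsto (fun n => setMass μ.p (qcell (q n) x \ {x}))
      Filter.atTop (nhds 0) := by
    refine squeeze_zero (fun n => setMass_nonneg μ _) (fun n => setMass_mono μ ?_) (hsuff x hx)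
    intro y hy
    exact ⟨Set.mem_biUnion Set.self_mem_Ici hy.1, hy.2⟩
  have heq : (fun n => setMass μ.p (qcell (q n) x)) =
      fun n => μ.p x + setMass μ.p (qcell (q n) x \ {x}) :=
    funext fun n => setMass_split μ (mem_qcell_self (q n) x)
  rw [heq]
  simpa using tendsto_const_nhds.add hδ

/-- Partition entropy is at most the full entropy. -/
private lemma entropyPart_le (μ : PMass ℕ) (Q : ℕ → ℕ) :
    entropyPartF Q μ.p ≤ entropy μ := by
  set g : ℕ → ℝ := fun x => -(μ.p x * Real.logb 2 (μ.p x)) with hg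
  have key : ∀ i : ℕ, ENNReal.ofReal
      (-(setMass μ.p (Q ⁻¹' {i}) * Real.logb 2 (setMass μ.p (Q ⁻¹' {i})))) ≤
      ∑' x : ℕ, ENNReal.ofReal ((Q ⁻¹' {i}).indicator g x) := by
    intro i
    set A : Set ℕ := Q ⁻¹' {i} with hA
    set S : ℝ := setMass μ.p A with hS
    set c : ℝ := -Real.logb 2 S with hc
    have hc0 : 0 ≤ c := by
      have : Real.logb 2 S ≤ 0 :=
        Real.logb_nonpos one_lt_two (setMass_nonneg μ A) (setMass_le_one μ A)
      linarith
    have h1 : -(S * Real.logb 2 S) = S * c := by rw [hc]; ring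
    have h2 : S * c = ∑' x : ℕ, A.indicator μ.p x * c := (tsum_mul_right).symm
    have h3 : ENNReal.ofReal (∑' x : ℕ, A.indicator μ.p x * c) =
        ∑' x : ℕ, ENNReal.ofReal (A.indicator μ.p x * c) :=
      ENNReal.ofReal_tsum_of_nonneg (fun x => mul_nonneg (ind_nonneg μ A x) hc0)
        ((summable_ind μ A).mul_right c)
    rw [h1, h2, h3]
    refine ENNReal.tsum_le_tsum fun x => ENNReal.ofReal_le_ofReal ?_
    by_cases hxA : x ∈ A
    · rw [Set.indicator_of_mem hxA, Set.indicator_of_mem hxA]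
      rcases eq_or_lt_of_le (μ.nonneg x) with h0 | h0
      · simp [← h0, hg]
      · have hle : μ.p x ≤ S := le_setMass μ hxA
        have hlog : Real.logb 2 (μ.p x) ≤ Real.logb 2 S :=
          Real.logb_le_logb_of_le one_lt_two h0 hle
        have : c ≤ -Real.logb 2 (μ.p x) := by rw [hc]; linarith
        calc μ.p x * c ≤ μ.p x * -Real.logb 2 (μ.p x) :=
              mul_le_mul_of_nonneg_left this (le_of_lt h0)
          _ = g x := by rw [hg]; ring
    · rw [Set.indicator_of_notMem hxA, Set.indicator_of_notMem hxA]
      simp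
  calc entropyPartF Q μ.p
      ≤ ∑' (i : ℕ) (x : ℕ), ENNReal.ofReal ((Q ⁻¹' {i}).indicator g x) :=
        ENNReal.tsum_le_tsum key
    _ = ∑' (x : ℕ) (i : ℕ), ENNReal.ofReal ((Q ⁻¹' {i}).indicator g x) := ENNReal.tsum_comm
    _ = ∑' x : ℕ, ENNReal.ofReal (g x) := by
        refine tsum_congr fun x => ?_
        rw [tsum_eq_single (Q x)]
        · simp [Set.indicator]
        · intro i hi
          have : x ∉ Q ⁻¹' {i} := by simp [Ne.symm hi]
          simp [Set.indicator_of_notMem this]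
    _ = entropy μ := rfl

end AuxStatement3

/-- Lemma 2: if a sequence of partitions (given by quantizers `q n`) is
asymptotically sufficient for `μ ∈ P_H(X)`, then `H_{σ(π_n)}(μ) → H(μ)`. -/
theorem statement_3 (μ : PMass ℕ) (hH : entropy μ ≠ ⊤) (q : ℕ → ℕ → ℕ)
    (hsuff : AsympSufficient q μ) :
    Filter.Tendsto (fun n => entropyPartF (q n) μ.p) Filter.atTop (nhds (entropy μ)) := by
  set g : ℕ → ℝ≥0∞ := fun x => ENNReal.ofReal (-(μ.p x * Real.logb 2 (μ.p x))) with hgdef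
  have hlimsup : Filter.limsup (fun n => entropyPartF (q n) μ.p) Filter.atTop ≤ entropy μ :=
    Filter.limsup_le_of_le (by isBoundedDefault)
      (Filter.Eventually.of_forall fun n => entropyPart_le μ (q n))
  have hliminf : entropy μ ≤ Filter.liminf (fun n => entropyPartF (q n) μ.p) Filter.atTop := by
    have hentropy : entropy μ = ∑' x : ℕ, g x := rfl
    rw [hentropy, ENNReal.tsum_eq_iSup_sum]
    refine iSup_le fun F => ?_
    classical
    set F' : Finset ℕ := F.filter (fun x => μ.p x ≠ 0) with hF'
    have hsumF : ∑ x ∈ F, g x = ∑ x ∈ F', g x := by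
      rw [hF', Finset.sum_filter_of_ne]
      intro x _ hgx
      intro hp0
      apply hgx
      simp [hgdef, hp0]
    rw [hsumF]
    -- cell masses converge for each x ∈ F'
    have hmem : ∀ x ∈ F', μ.p x ≠ 0 := fun x hx => (Finset.mem_filter.mp hx).2
    have htend : ∀ x ∈ F',
        Filter.Tendsto (fun n => setMass μ.p (qcell (q n) x)) Filter.atTop (nhds (μ.p x)) :=
      fun x hx => cellMass_tendsto μ q hsuff (hmem x hx)
    -- eventually the quantizer is injective on F'
    have hinj : ∀ᶠ n in Filter.atTop, ∀ x ∈ F', ∀ y ∈ F', x ≠ y → q n x ≠ q n y := by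
      rw [Filter.eventually_all_finset]
      intro x hx
      rw [Filter.eventually_all_finset]
      intro y hy
      by_cases hxy : x = y
      · exact Filter.Eventually.of_forall fun n h => absurd hxy h
      · have hpy : 0 < μ.p y := lt_of_le_of_ne (μ.nonneg y) (Ne.symm (hmem y hy))
        have hlt : μ.p x < μ.p x + μ.p y := by linarith
        filter_upwards [(htend x hx).eventually_lt_const hlt] with n hn _ hq
        have hyc : y ∈ qcell (q n) x \ {x} := by
          refine ⟨hq.symm, ?_⟩
          simp [Ne.symm hxy]
        have h1 : setMass μ.p (qcell (q n) x) = μ.p x + setMass μ.p (qcell (q n) x \ {x}) :=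
          setMass_split μ (mem_qcell_self (q n) x)
        have h2 : μ.p y ≤ setMass μ.p (qcell (q n) x \ {x}) := le_setMass μ hyc
        linarith
    -- the finite sum of cell-entropy terms is eventually below the partition entropy
    have hbound : ∀ᶠ n in Filter.atTop,
        ∑ x ∈ F', ENNReal.ofReal
          (-(setMass μ.p (qcell (q n) x) * Real.logb 2 (setMass μ.p (qcell (q n) x)))) ≤
        entropyPartF (q n) μ.p := by
      filter_upwards [hinj] with n hn
      have hinj' : Set.InjOn (q n) ↑F' := fun a ha b hb hab => by
        by_contra hne
        exact hn a ha b hb hne hab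
      have himg : ∑ x ∈ F', ENNReal.ofReal
            (-(setMass μ.p (qcell (q n) x) * Real.logb 2 (setMass μ.p (qcell (q n) x)))) =
          ∑ i ∈ F'.image (q n), ENNReal.ofReal
            (-(setMass μ.p ((q n) ⁻¹' {i}) * Real.logb 2 (setMass μ.p ((q n) ⁻¹' {i})))) := by
        rw [Finset.sum_image (fun a ha b hb hab => hinj' ha hb hab)]
        refine Finset.sum_congr rfl fun x _ => ?_
        rw [qcell_eq_preimage]
      rw [himg]
      exact ENNReal.sum_le_tsum _
    -- the finite sum converges to ∑_{x∈F'} g x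
    have hlim : Filter.Tendsto (fun n => ∑ x ∈ F', ENNReal.ofReal
        (-(setMass μ.p (qcell (q n) x) * Real.logb 2 (setMass μ.p (qcell (q n) x)))))
        Filter.atTop (nhds (∑ x ∈ F', g x)) := by
      refine tendsto_finset_sum _ fun x hx => ?_
      have hpx : 0 < μ.p x := lt_of_le_of_ne (μ.nonneg x) (Ne.symm (hmem x hx))
      have hcont : ContinuousAt (fun t : ℝ => ENNReal.ofReal (-(t * Real.logb 2 t))) (μ.p x) := by
        refine ENNReal.continuous_ofReal.continuousAt.comp ?_
        exact (continuousAt_id.mul (Real.continuousAt_logb (ne_of_gt hpx))).neg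
      exact hcont.tendsto.comp (htend x hx)
    calc ∑ x ∈ F', g x
        = Filter.liminf (fun n => ∑ x ∈ F', ENNReal.ofReal
            (-(setMass μ.p (qcell (q n) x) * Real.logb 2 (setMass μ.p (qcell (q n) x)))))
            Filter.atTop := (hlim.liminf_eq).symm
      _ ≤ Filter.liminf (fun n => entropyPartF (q n) μ.p) Filter.atTop :=
            Filter.liminf_le_liminf hbound
  exact tendsto_of_le_liminf_of_limsup_le hliminf hlimsup
end

section
/- If f ∉ ℓ¹(X), then for every block-length n and every two-stage lossy code (φ_n,ψ_n,C_n) of finite size, sup_{μ∈Λ_f} d(φ_n,ψ_n,μ^n) = 1. -/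
open scoped ENNReal
open Filter
open scoped Classical

/-! Auxiliary lemmas for `statement_8`. -/

lemma blockP_nonneg {n : ℕ} (μ : PMass ℕ) (x : Fin n → ℕ) : 0 ≤ blockP n μ x :=
  Finset.prod_nonneg fun i _ => μ.nonneg (x i)

lemma blockP_hasSum (n : ℕ) (μ : PMass ℕ) : HasSum (blockP n μ) 1 := by
  induction n with
  | zero =>
      have h := hasSum_fintype (blockP 0 μ)
      simpa [blockP] using h
  | succ n ih =>
      have hprod : HasSum (fun p : ℕ × (Fin n → ℕ) => μ.p p.1 * blockP n μ p.2) 1 := by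
        have hs : Summable (fun p : ℕ × (Fin n → ℕ) => μ.p p.1 * blockP n μ p.2) :=
          μ.sum_one.summable.mul_of_nonneg ih.summable μ.nonneg (blockP_nonneg μ)
        simpa using μ.sum_one.mul ih hs
      refine ((Fin.consEquiv (fun _ : Fin (n+1) => ℕ)).hasSum_iff
        (f := blockP (n+1) μ) (a := 1)).mp ?_
      have hfun : (blockP (n+1) μ ∘ (Fin.consEquiv (fun _ : Fin (n+1) => ℕ)))
          = fun p => μ.p p.1 * blockP n μ p.2 := by
        funext p
        simp [blockP, Function.comp, Fin.consEquiv, Fin.prod_univ_succ]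
      rw [hfun]; exact hprod

lemma distortion2_nonneg {n k : ℕ} (c : TwoStageCode n k) (μ : PMass ℕ) (x : Fin n → ℕ) :
    0 ≤ blockP n μ x *
      (((Finset.univ.filter fun i => x i ≠ c.recon (c.quant (x i))).card : ℝ) / n) := by
  apply mul_nonneg (blockP_nonneg μ x)
  positivity

lemma distortion2_term_le {n k : ℕ} (c : TwoStageCode n k) (μ : PMass ℕ) (x : Fin n → ℕ) :
    blockP n μ x *
      (((Finset.univ.filter fun i => x i ≠ c.recon (c.quant (x i))).card : ℝ) / n)
      ≤ blockP n μ x := by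
  apply mul_le_of_le_one_right (blockP_nonneg μ x)
  rcases Nat.eq_zero_or_pos n with h | h
  · simp [h]
  · rw [div_le_one (by exact_mod_cast h)]
    exact_mod_cast (Finset.card_filter_le _ _).trans (by simp)

lemma distortion2_le_one {n k : ℕ} (c : TwoStageCode n k) (μ : PMass ℕ) :
    distortion2 c μ ≤ 1 := by
  unfold distortion2
  have hsum := (blockP_hasSum n μ).summable
  have hle := distortion2_term_le c μ
  have hnn := distortion2_nonneg c μ
  calc (∑' x : Fin n → ℕ, blockP n μ x *
        (((Finset.univ.filter fun i => x i ≠ c.recon (c.quant (x i))).card : ℝ) / n))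
      ≤ ∑' x : Fin n → ℕ, blockP n μ x := by
        refine Summable.tsum_le_tsum hle ?_ hsum
        exact Summable.of_nonneg_of_le hnn hle hsum
    _ = 1 := (blockP_hasSum n μ).tsum_eq

/-- Theorem 3(ii), finite-size part: if `f ∉ ℓ¹(X)`, every finite-size
two-stage lossy code has worst-case distortion `1` over `Λ_f`. -/
theorem statement_8 (f : ℕ → ℝ) (h0 : ∀ x, 0 ≤ f x) (h1 : ∀ x, f x ≤ 1)
    (hns : ¬ Summable f) (n k : ℕ) (hn : 1 ≤ n) (c : TwoStageCode n k) :
    (⨆ μ ∈ Lambda f, distortion2 c μ) = 1 := by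
  classical
  set G : Finset ℕ := Finset.image c.recon Finset.univ with hG
  -- f is still non-summable off the finite set G
  have hgnn : ∀ x, 0 ≤ (if x ∈ G then 0 else f x) := by
    intro x; split <;> simp [h0 x]
  have hg : ¬ Summable (fun x => if x ∈ G then 0 else f x) := by
    intro hsum
    apply hns
    have h2 : Summable (fun x => if x ∈ G then f x else 0) :=
      summable_of_ne_finset_zero (s := G) (by intro x hx; simp [hx])
    have := hsum.add h2
    refine this.congr fun x => ?_
    by_cases hx : x ∈ G <;> simp [hx]
  -- find a finite set F disjoint from G carrying mass at least 1
  have htend := (not_summable_iff_tendsto_nat_atTop_of_nonneg hgnn).mp hg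
  obtain ⟨N, hN⟩ := (htend.eventually_ge_atTop 1).exists
  set F : Finset ℕ := (Finset.range N).filter (· ∉ G) with hF
  have hsF : 1 ≤ ∑ x ∈ F, f x := by
    refine le_trans hN (le_of_eq ?_)
    rw [hF, Finset.sum_filter]
    refine Finset.sum_congr rfl fun x _ => ?_
    by_cases hx : x ∈ G <;> simp [hx]
  set s : ℝ := ∑ x ∈ F, f x with hs
  have hs0 : 0 < s := lt_of_lt_of_le one_pos hsF
  -- the worst-case measure μ0
  have hμsum : HasSum (fun x => if x ∈ F then f x / s else 0) 1 := by
    have h1 : HasSum (fun x => if x ∈ F then f x / s else 0)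
        (∑ x ∈ F, if x ∈ F then f x / s else 0) :=
      hasSum_sum_of_ne_finset_zero (by intro x hx; simp [hx])
    have h2 : (∑ x ∈ F, if x ∈ F then f x / s else 0) = 1 := by
      rw [Finset.sum_congr rfl (fun x hx => if_pos hx), ← Finset.sum_div, ← hs,
        div_self hs0.ne']
    rwa [h2] at h1
  set μ0 : PMass ℕ :=
    ⟨fun x => if x ∈ F then f x / s else 0,
     fun x => by split
                 · exact div_nonneg (h0 x) hs0.le
                 · exact le_refl 0,
     hμsum⟩ with hμ0
  have hmem : μ0 ∈ Lambda f := by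
    intro x
    show (if x ∈ F then f x / s else 0) ≤ f x
    split
    · exact div_le_self (h0 x) hsF
    · exact h0 x
  -- distortion of μ0 is 1
  have hd : distortion2 c μ0 = 1 := by
    unfold distortion2
    have hterm : ∀ x : Fin n → ℕ,
        blockP n μ0 x *
          (((Finset.univ.filter fun i => x i ≠ c.recon (c.quant (x i))).card : ℝ) / n)
        = blockP n μ0 x := by
      intro x
      by_cases hx : ∀ i, x i ∈ F
      · have hne : ∀ i : Fin n, x i ≠ c.recon (c.quant (x i)) := by
          intro i hEq
          have : x i ∈ G := by
            rw [hG]; exact hEq ▸ Finset.mem_image_of_mem c.recon (Finset.mem_univ _)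
          have := (Finset.mem_filter.mp (hF ▸ hx i)).2
          exact this ‹x i ∈ G›
        have hfilter : (Finset.univ.filter fun i => x i ≠ c.recon (c.quant (x i)))
            = Finset.univ := by
          apply Finset.filter_true_of_mem; intro i _; exact hne i
        rw [hfilter]
        simp only [Finset.card_univ, Fintype.card_fin]
        rw [div_self (by exact_mod_cast Nat.one_le_iff_ne_zero.mp hn), mul_one]
      · push_neg at hx
        obtain ⟨i, hi⟩ := hx
        have hz : blockP n μ0 x = 0 := by
          apply Finset.prod_eq_zero (Finset.mem_univ i)
          show (if x i ∈ F then f (x i) / s else 0) = 0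
          simp [hi]
        rw [hz, zero_mul]
    rw [tsum_congr hterm]
    exact (blockP_hasSum n μ0).tsum_eq
  -- assemble
  have hub : ∀ μ : PMass ℕ, (⨆ _ : μ ∈ Lambda f, distortion2 c μ) ≤ 1 := by
    intro μ
    exact Real.iSup_le (fun _ => distortion2_le_one c μ) zero_le_one
  refine le_antisymm (Real.iSup_le hub zero_le_one) ?_
  have hbdd : BddAbove (Set.range fun μ : PMass ℕ =>
      ⨆ _ : μ ∈ Lambda f, distortion2 c μ) := by
    refine ⟨1, ?_⟩
    rintro y ⟨μ, rfl⟩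
    exact hub μ
  have h1 : (⨆ _ : μ0 ∈ Lambda f, distortion2 c μ0) = distortion2 c μ0 := ciSup_pos hmem
  calc (1 : ℝ) = distortion2 c μ0 := hd.symm
    _ = ⨆ _ : μ0 ∈ Lambda f, distortion2 c μ0 := h1.symm
    _ ≤ ⨆ μ ∈ Lambda f, distortion2 c μ := le_ciSup hbdd μ0
end

section
/- If f ∉ ℓ¹(X), then for every block-length n and every variable-length lossy code (f_n,g_n) satisfying sup_{μ∈Λ_f} d(f_n,g_n,μ^n) < 1, it holds that sup_{μ∈Λ_f} (r(f_n,μ^n) − H(μ)) = ∞. -/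
open scoped ENNReal
open Filter
open scoped Classical

/-- All boolean lists of length `L`, as a Finset. -/
noncomputable def allL (L : ℕ) : Finset (List Bool) :=
  (Finset.univ : Finset (Fin L → Bool)).image List.ofFn

lemma mem_allL {L : ℕ} {u : List Bool} (h : u.length = L) : u ∈ allL L := by
  subst h
  exact Finset.mem_image.2 ⟨u.get, Finset.mem_univ _, List.ofFn_get u⟩

lemma card_allL (L : ℕ) : (allL L).card = 2 ^ L := by
  rw [allL, Finset.card_image_of_injective _ (by
    intro a b hab
    funext i
    have := congrArg (fun l : List Bool => l.length) hab
    exact List.ofFn_injective hab ▸ rfl)]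
  · simp [Fintype.card_fun]

lemma kraft (W : Finset (List Bool))
    (hpf : ∀ w ∈ W, ∀ v ∈ W, w ≠ v → ¬ w <+: v) :
    ∑ w ∈ W, ((1:ℝ)/2) ^ w.length ≤ 1 := by
  set L := W.sup List.length with hL
  have hlen : ∀ w ∈ W, w.length ≤ L := fun w hw => Finset.le_sup hw
  -- extension sets
  set A : List Bool → Finset (List Bool) :=
    fun w => (Finset.univ : Finset (Fin (L - w.length) → Bool)).image (fun g => w ++ List.ofFn g)
    with hA
  have hcard : ∀ w, (A w).card = 2 ^ (L - w.length) := by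
    intro w
    rw [hA]
    rw [Finset.card_image_of_injective _ (fun a b hab => List.ofFn_injective
      (List.append_cancel_left hab))]
    simp [Fintype.card_fun]
  have hsub : ∀ w ∈ W, A w ⊆ allL L := by
    intro w hw u hu
    rcases Finset.mem_image.1 hu with ⟨g, _, rfl⟩
    exact mem_allL (by simp [Nat.add_sub_cancel' (hlen w hw)])
  have hdisj : ∀ w ∈ W, ∀ v ∈ W, w ≠ v → Disjoint (A w) (A v) := by
    intro w hw v hv hne
    rw [Finset.disjoint_left]
    intro u huw huv
    rcases Finset.mem_image.1 huw with ⟨g, _, rfl⟩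
    rcases Finset.mem_image.1 huv with ⟨g', _, he⟩
    have h1 : w <+: w ++ List.ofFn g := List.prefix_append _ _
    have h2 : v <+: w ++ List.ofFn g := he ▸ List.prefix_append _ _
    rcases List.prefix_or_prefix_of_prefix h2 h1 with h | h
    · exact hpf v hv w hw (Ne.symm hne) h
    · exact hpf w hw v hv hne h
  have hcards : ∑ w ∈ W, (2:ℕ) ^ (L - w.length) ≤ 2 ^ L := by
    calc ∑ w ∈ W, (2:ℕ) ^ (L - w.length) = ∑ w ∈ W, (A w).card := by
          exact Finset.sum_congr rfl fun w _ => (hcard w).symm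
      _ = (W.biUnion A).card := (Finset.card_biUnion hdisj).symm
      _ ≤ (allL L).card := Finset.card_le_card (by
          intro u hu
          rcases Finset.mem_biUnion.1 hu with ⟨w, hw, hu⟩
          exact hsub w hw hu)
      _ = 2 ^ L := card_allL L
  have h2L : (0:ℝ) < 2 ^ L := by positivity
  have hcR : (∑ w ∈ W, ((2:ℝ)) ^ (L - w.length)) ≤ 2 ^ L := by exact_mod_cast hcards
  calc ∑ w ∈ W, ((1:ℝ)/2) ^ w.length
      = (∑ w ∈ W, ((2:ℝ)) ^ (L - w.length)) / 2 ^ L := by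
        rw [Finset.sum_div]
        refine Finset.sum_congr rfl fun w hw => ?_
        have h2 : (2:ℝ) ^ L = 2 ^ (L - w.length) * 2 ^ w.length := by
          rw [← pow_add, Nat.sub_add_cancel (hlen w hw)]
        rw [h2]
        field_simp
        rw [← mul_pow]; norm_num
    _ ≤ 1 := (div_le_one h2L).2 hcR


/-- Gibbs / log-sum inequality. -/
lemma gibbs {α : Type*} (T : Finset α) (P b : α → ℝ)
    (hP : ∀ x ∈ T, 0 < P x) (hb : ∀ x ∈ T, 0 < b x)
    (hsum : ∑ x ∈ T, P x = 1) :
    - Real.log (∑ x ∈ T, b x) ≤ ∑ x ∈ T, P x * Real.log (P x / b x) := by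
  set Q := ∑ x ∈ T, b x with hQ
  have hTne : T.Nonempty := by
    by_contra h
    rw [Finset.not_nonempty_iff_eq_empty] at h
    simp [h] at hsum
  have hQpos : 0 < Q := Finset.sum_pos hb hTne
  have key : ∀ x ∈ T, P x * Real.log (b x / (P x * Q)) ≤ b x / Q - P x := by
    intro x hx
    have hpx := hP x hx
    have hbx := hb x hx
    have hpos : 0 < b x / (P x * Q) := by positivity
    have := Real.log_le_sub_one_of_pos hpos
    calc P x * Real.log (b x / (P x * Q)) ≤ P x * (b x / (P x * Q) - 1) := by
          exact mul_le_mul_of_nonneg_left this hpx.le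
      _ = b x / Q - P x := by field_simp
  have hsum2 : ∑ x ∈ T, P x * Real.log (b x / (P x * Q)) ≤ 0 := by
    calc ∑ x ∈ T, P x * Real.log (b x / (P x * Q)) ≤ ∑ x ∈ T, (b x / Q - P x) :=
          Finset.sum_le_sum key
      _ = (∑ x ∈ T, b x) / Q - ∑ x ∈ T, P x := by rw [Finset.sum_sub_distrib, Finset.sum_div]
      _ = 0 := by rw [hsum, ← hQ, div_self (ne_of_gt hQpos)]; ring
  have expand : ∀ x ∈ T, P x * Real.log (b x / (P x * Q)) =
      - (P x * Real.log (P x / b x)) - P x * Real.log Q := by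
    intro x hx
    have hpx := hP x hx
    have hbx := hb x hx
    rw [Real.log_div (ne_of_gt hbx) (by positivity), Real.log_mul (ne_of_gt hpx) (ne_of_gt hQpos),
      Real.log_div (ne_of_gt hpx) (ne_of_gt hbx)]
    ring
  rw [Finset.sum_congr rfl expand] at hsum2
  rw [Finset.sum_sub_distrib, ← Finset.sum_mul, hsum, one_mul, Finset.sum_neg_distrib] at hsum2
  linarith

/-- Key product identity. -/
lemma pi_sum_identity (S : Finset ℕ) (p g : ℕ → ℝ) (hsum : ∑ a ∈ S, p a = 1) (n : ℕ) :
    ∑ x ∈ Fintype.piFinset (fun _ : Fin n => S),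
      (∏ i, p (x i)) * (∑ i, g (x i)) = n * ∑ a ∈ S, p a * g a := by
  have step : ∀ i : Fin n, ∑ x ∈ Fintype.piFinset (fun _ : Fin n => S),
      (∏ i', p (x i')) * g (x i) = ∑ a ∈ S, p a * g a := by
    intro i
    have hpt : ∀ x ∈ Fintype.piFinset (fun _ : Fin n => S),
        (∏ i', p (x i')) * g (x i) = ∏ i', (p (x i') * (if i' = i then g (x i') else 1)) := by
      intro x _
      rw [Finset.prod_mul_distrib, Finset.prod_ite_eq' Finset.univ i (fun i' => g (x i'))]
      simp
    have huniv := Finset.prod_univ_sum (fun _ : Fin n => S)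
      (fun i' a => p a * if i' = i then g a else 1)
    rw [Finset.sum_congr rfl hpt, ← huniv]
    have : ∀ i' : Fin n, ∑ a ∈ S, p a * (if i' = i then g a else 1) =
        if i' = i then ∑ a ∈ S, p a * g a else 1 := by
      intro i'
      split_ifs with h
      · simp [h]
      · simp [h, hsum]
    rw [Finset.prod_congr rfl (fun i' _ => this i'),
      Finset.prod_ite_eq' Finset.univ i (fun _ => ∑ a ∈ S, p a * g a)]
    simp
  calc ∑ x ∈ Fintype.piFinset (fun _ : Fin n => S), (∏ i, p (x i)) * (∑ i, g (x i))
      = ∑ x ∈ Fintype.piFinset (fun _ : Fin n => S), ∑ i, (∏ i', p (x i')) * g (x i) := by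
        refine Finset.sum_congr rfl fun x _ => ?_
        rw [Finset.mul_sum]
    _ = ∑ i : Fin n, ∑ x ∈ Fintype.piFinset (fun _ : Fin n => S), (∏ i', p (x i')) * g (x i) :=
        Finset.sum_comm
    _ = ∑ _i : Fin n, ∑ a ∈ S, p a * g a := Finset.sum_congr rfl fun i _ => step i
    _ = n * ∑ a ∈ S, p a * g a := by simp [Finset.sum_const, nsmul_eq_mul]

/-- Product total mass. -/
lemma pi_total (S : Finset ℕ) (p : ℕ → ℝ) (hsum : ∑ a ∈ S, p a = 1) (n : ℕ) :
    ∑ x ∈ Fintype.piFinset (fun _ : Fin n => S), (∏ i, p (x i)) = 1 := by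
  rw [← Finset.prod_univ_sum]
  simp [hsum]


section Clamp
variable (f : ℕ → ℝ)

noncomputable def Cps (N : ℕ) : ℝ := ∑ x ∈ Finset.range N, f x

noncomputable def clampf (t : ℝ) (x : ℕ) : ℝ := min (max (Cps f x - t) 0) 1

noncomputable def pshift (t : ℝ) (x : ℕ) : ℝ := clampf f t (x+1) - clampf f t x

variable {f}

lemma Cps_mono (h0 : ∀ x, 0 ≤ f x) : Monotone (Cps f) := by
  intro a b hab
  exact Finset.sum_le_sum_of_subset_of_nonneg (Finset.range_subset_range.2 hab)
    (fun i _ _ => h0 i)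

lemma Cps_succ (x : ℕ) : Cps f (x + 1) = Cps f x + f x := Finset.sum_range_succ f x

lemma clampf_mono (h0 : ∀ x, 0 ≤ f x) (t : ℝ) : Monotone (clampf f t) := by
  intro a b hab
  exact min_le_min (max_le_max (by linarith [Cps_mono h0 hab]) le_rfl) le_rfl

lemma pshift_nonneg (h0 : ∀ x, 0 ≤ f x) (t : ℝ) (x : ℕ) : 0 ≤ pshift f t x :=
  sub_nonneg.2 (clampf_mono h0 t (Nat.le_succ x))

lemma pshift_le (h0 : ∀ x, 0 ≤ f x) (t : ℝ) (x : ℕ) : pshift f t x ≤ f x := by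
  have h := Cps_succ (f := f) x
  unfold pshift clampf
  have h1 : max (Cps f (x+1) - t) 0 ≤ max (Cps f x - t) 0 + f x := by
    rcases le_or_gt (Cps f (x+1) - t) 0 with h' | h'
    · simp only [max_eq_right h']
      have := h0 x
      positivity
    · rw [max_eq_left h'.le]
      have : Cps f x - t ≤ max (Cps f x - t) 0 := le_max_left _ _
      linarith
  have h2 : min (max (Cps f (x+1) - t) 0) 1 ≤ min (max (Cps f x - t) 0 + f x) 1 :=
    min_le_min h1 le_rfl
  have h3 : min (max (Cps f x - t) 0 + f x) 1 ≤ min (max (Cps f x - t) 0) 1 + f x := by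
    rcases le_or_gt (max (Cps f x - t) 0 + f x) 1 with h' | h'
    · rw [min_eq_left h']
      have : min (max (Cps f x - t) 0) 1 = max (Cps f x - t) 0 := by
        apply min_eq_left; linarith [h0 x]
      linarith
    · rw [min_eq_right h'.le]
      have hx := h0 x
      have : (1:ℝ) - f x ≤ max (Cps f x - t) 0 := by linarith
      have := le_min this (by linarith : (1:ℝ) - f x ≤ 1)
      linarith
  linarith

lemma pshift_zero_of_ge (h0 : ∀ x, 0 ≤ f x) {t : ℝ} {x : ℕ} (hx : t + 1 ≤ Cps f x) : pshift f t x = 0 := by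
  unfold pshift clampf
  have h1 : min (max (Cps f x - t) 0) 1 = 1 := by
    rw [min_eq_right]; exact le_max_of_le_left (by linarith)
  have h2 : min (max (Cps f (x+1) - t) 0) 1 = 1 := by
    rw [min_eq_right]
    exact le_max_of_le_left (by linarith [Cps_mono h0 (Nat.le_succ x)])
  rw [h1, h2]; ring

lemma pshift_supp_lt (h0 : ∀ x, 0 ≤ f x) {t : ℝ} {x : ℕ} (hx : pshift f t x ≠ 0) : Cps f x < t + 1 := by
  by_contra h
  exact hx (pshift_zero_of_ge h0 (not_lt.1 h))

lemma pshift_supp_gt (h0 : ∀ x, 0 ≤ f x) {t : ℝ} {x : ℕ} (hx : pshift f t x ≠ 0) : t < Cps f (x + 1) := by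
  by_contra h
  apply hx
  unfold pshift clampf
  have h1 : max (Cps f (x+1) - t) 0 = 0 := max_eq_right (by linarith [not_lt.1 h])
  have h2 : max (Cps f x - t) 0 = 0 :=
    max_eq_right (by linarith [not_lt.1 h, Cps_mono h0 (Nat.le_succ x)])
  rw [h1, h2]
  simp

lemma pshift_sum_range (h0 : ∀ x, 0 ≤ f x) (t : ℝ) (ht : 0 ≤ t) (N : ℕ) (hN : t + 1 ≤ Cps f N) :
    ∑ x ∈ Finset.range N, pshift f t x = 1 := by
  unfold pshift
  rw [Finset.sum_range_sub (clampf f t) N]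
  have h0' : clampf f t 0 = 0 := by
    unfold clampf Cps
    simp only [Finset.range_zero, Finset.sum_empty]
    rw [max_eq_right (by linarith), min_eq_left (by norm_num)]
  have hN' : clampf f t N = 1 := by
    unfold clampf
    rw [min_eq_right]; exact le_max_of_le_left (by linarith)
  rw [h0', hN']; ring

end Clamp


set_option maxHeartbeats 1000000 in
/-- Theorem 3(ii), general lossy codes: if `f ∉ ℓ¹(X)`, then every
variable-length lossy code whose worst-case distortion over `Λ_f` is strictly less than `1`
has infinite worst-case redundancy over `Λ_f`. -/
theorem statement_10 (f : ℕ → ℝ) (h0 : ∀ x, 0 ≤ f x) (h1 : ∀ x, f x ≤ 1)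
    (hns : ¬ Summable f) (n : ℕ) (hn : 1 ≤ n) (c : LossyCode n)
    (hd : (⨆ μ ∈ Lambda f, distortion n c μ) < 1) :
    (⨆ μ ∈ Lambda f, ((rate n c μ : EReal) - (entropy μ : EReal))) = ⊤ := by
  clear hd
  have hnR : (0:ℝ) < n := by exact_mod_cast hn
  have hC : Filter.Tendsto (fun N => Cps f N) Filter.atTop Filter.atTop :=
    (not_summable_iff_tendsto_nat_atTop_of_nonneg h0).1 hns
  have hNex : ∀ i : ℕ, ∃ N : ℕ, 2 * (i:ℝ) + 1 ≤ Cps f N := fun i =>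
    (hC.eventually_ge_atTop (2 * (i:ℝ) + 1)).exists
  choose N hN using hNex
  set q : ℕ → ℕ → ℝ := fun i => pshift f (2 * (i:ℝ)) with hq
  have hq0 : ∀ i a, 0 ≤ q i a := fun i a => pshift_nonneg h0 _ a
  have hqf : ∀ i a, q i a ≤ f a := fun i a => pshift_le h0 _ a
  set S : ℕ → Finset ℕ := fun i => (Finset.range (N i)).filter (fun a => q i a ≠ 0) with hS
  have hqS : ∀ i, ∀ a ∉ S i, q i a = 0 := by
    intro i a ha
    by_contra hne
    apply ha
    rw [hS]
    simp only [Finset.mem_filter, Finset.mem_range]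
    refine ⟨?_, hne⟩
    by_contra hlt
    push_neg at hlt
    have hle : 2 * (i:ℝ) + 1 ≤ Cps f a := le_trans (hN i) (Cps_mono h0 hlt)
    exact hne (pshift_zero_of_ge h0 hle)
  have hrange : ∀ i, ∑ a ∈ Finset.range (N i), q i a = 1 := fun i =>
    pshift_sum_range h0 _ (by positivity) _ (hN i)
  have hsumS : ∀ i, ∑ a ∈ S i, q i a = 1 := by
    intro i
    rw [hS]
    rw [Finset.sum_filter_ne_zero]
    exact hrange i
  have hSpos : ∀ i, ∀ a ∈ S i, 0 < q i a := by
    intro i a ha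
    rw [hS] at ha
    simp only [Finset.mem_filter] at ha
    exact lt_of_le_of_ne (hq0 i a) (Ne.symm ha.2)
  have hSdisjkey : ∀ i j : ℕ, i < j → ∀ a, a ∈ S i → a ∈ S j → False := by
    intro i j hij a hai haj
    have hqi : q i a ≠ 0 := by rw [hS] at hai; exact (Finset.mem_filter.1 hai).2
    have hqj : q j a ≠ 0 := by rw [hS] at haj; exact (Finset.mem_filter.1 haj).2
    have ha1 : Cps f a < 2 * (i:ℝ) + 1 := pshift_supp_lt h0 hqi
    have ha2 : 2 * (j:ℝ) < Cps f (a+1) := pshift_supp_gt h0 hqj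
    have ha3 : Cps f (a+1) = Cps f a + f a := Cps_succ a
    have hij' : (i:ℝ) + 1 ≤ (j:ℝ) := by exact_mod_cast hij
    have := h1 a
    linarith
  have hSdisj : ∀ i j : ℕ, i ≠ j → ∀ a, a ∈ S i → a ∈ S j → False := by
    intro i j hij a hai haj
    rcases lt_or_gt_of_ne hij with h | h
    · exact hSdisjkey i j h a hai haj
    · exact hSdisjkey j i h a haj hai
  set μm : ℕ → PMass ℕ := fun i => ⟨q i, hq0 i, by
    have hhs := hasSum_sum_of_ne_finset_zero (L := SummationFilter.unconditional ℕ) (s := S i) (hqS i)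
    rwa [hsumS i] at hhs⟩ with hμm
  have hμp : ∀ i, (μm i).p = q i := fun i => rfl
  have hμΛ : ∀ i, μm i ∈ Lambda f := fun i a => hqf i a
  rw [iSup_eq_top]
  intro b hb
  obtain ⟨z, hbz, -⟩ := EReal.exists_between_coe_real hb
  set L : ℕ := ⌈max z 0⌉₊ + 1 with hL
  have hzL : z < (L:ℝ) := by
    have hc1 : max z 0 ≤ (⌈max z 0⌉₊ : ℝ) := Nat.le_ceil _
    have hc2 := le_max_left z 0
    rw [hL]
    push_cast
    linarith
  set K := n * L with hK
  set m := 2 ^ K with hm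
  have hm1 : 1 ≤ m := Nat.one_le_two_pow
  have hmR : (0:ℝ) < m := by exact_mod_cast hm1
  set T : ℕ → Finset (Fin n → ℕ) := fun i => Fintype.piFinset (fun _ => S i) with hT
  have hencinj : Function.Injective c.enc := by
    intro a b hab
    by_contra hne
    exact c.prefix_free a b hne (hab ▸ List.prefix_refl _)
  have hTdisj : ∀ i ∈ Finset.range m, ∀ j ∈ Finset.range m, i ≠ j → Disjoint (T i) (T j) := by
    intro i _ j _ hij
    rw [Finset.disjoint_left]
    intro x hxi hxj
    rw [hT] at hxi hxj
    exact hSdisj i j hij (x ⟨0, hn⟩)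
      (Fintype.mem_piFinset.1 hxi _) (Fintype.mem_piFinset.1 hxj _)
  set QQ : ℕ → ℝ := fun i => ∑ x ∈ T i, ((1:ℝ)/2) ^ (c.enc x).length with hQQ
  have hkraft : ∑ i ∈ Finset.range m, QQ i ≤ 1 := by
    have h1' : ∑ i ∈ Finset.range m, QQ i
        = ∑ x ∈ (Finset.range m).biUnion T, ((1:ℝ)/2) ^ (c.enc x).length := by
      rw [Finset.sum_biUnion (fun i hi j hj hij => hTdisj i hi j hj hij)]
    have h2' : ∑ x ∈ (Finset.range m).biUnion T, ((1:ℝ)/2) ^ (c.enc x).length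
        = ∑ w ∈ ((Finset.range m).biUnion T).image c.enc, ((1:ℝ)/2) ^ w.length := by
      rw [Finset.sum_image (fun a _ b _ h => hencinj h)]
    rw [h1', h2']
    apply kraft
    intro w hw v hv hne
    obtain ⟨a, _, rfl⟩ := Finset.mem_image.1 hw
    obtain ⟨bb, _, rfl⟩ := Finset.mem_image.1 hv
    exact c.prefix_free a bb (fun h => hne (h ▸ rfl))
  obtain ⟨i, -, hQi⟩ : ∃ i ∈ Finset.range m, QQ i ≤ 1/m := by
    apply Finset.exists_le_of_sum_le ⟨0, Finset.mem_range.2 (by omega)⟩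
    calc ∑ i ∈ Finset.range m, QQ i ≤ 1 := hkraft
      _ = ∑ _i ∈ Finset.range m, (1:ℝ)/m := by
          rw [Finset.sum_const, Finset.card_range, nsmul_eq_mul]
          field_simp
  -- chosen i
  set P : (Fin n → ℕ) → ℝ := fun x => ∏ k, q i (x k) with hPdef
  have hPpos : ∀ x ∈ T i, 0 < P x := by
    intro x hx
    rw [hT] at hx
    exact Finset.prod_pos (fun k _ => hSpos i _ (Fintype.mem_piFinset.1 hx k))
  have hP0 : ∀ x, x ∉ T i → P x = 0 := by
    intro x hx
    rw [hT] at hx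
    have : ¬ ∀ k, x k ∈ S i := fun h => hx (Fintype.mem_piFinset.2 h)
    push_neg at this
    obtain ⟨k, hk⟩ := this
    exact Finset.prod_eq_zero (Finset.mem_univ k) (hqS i _ hk)
  have hPsum : ∑ x ∈ T i, P x = 1 := pi_total (S i) (q i) (hsumS i) n
  have hSne : (S i).Nonempty := Finset.nonempty_of_sum_ne_zero (by rw [hsumS i]; norm_num)
  have hTne : (T i).Nonempty := by
    rw [hT]
    exact Fintype.piFinset_nonempty.2 fun _ => hSne
  have hQpos : 0 < QQ i := Finset.sum_pos (fun x _ => by positivity) hTne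
  have hgibbs := gibbs (T i) P (fun x => ((1:ℝ)/2) ^ (c.enc x).length) hPpos
    (fun x _ => by positivity) hPsum
  set R := ∑ x ∈ T i, P x * ((c.enc x).length : ℝ) with hR
  set E := ∑ a ∈ S i, q i a * Real.log (q i a) with hE
  have hlog2 : (0:ℝ) < Real.log 2 := Real.log_pos one_lt_two
  -- block log identity
  have hblocklog : ∑ x ∈ T i, P x * Real.log (P x) = n * E := by
    rw [hE, ← pi_sum_identity (S i) (q i) (fun a => Real.log (q i a)) (hsumS i) n]
    rw [hT]
    refine Finset.sum_congr rfl fun x hx => ?_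
    have : Real.log (P x) = ∑ k, Real.log (q i (x k)) :=
      Real.log_prod (fun k _ => (hSpos i _ (Fintype.mem_piFinset.1 hx k)).ne')
    rw [hPdef, this]
  -- expand gibbs
  have hexp : ∑ x ∈ T i, P x * Real.log (P x / ((1:ℝ)/2) ^ (c.enc x).length)
      = n * E + Real.log 2 * R := by
    have hterm : ∀ x ∈ T i, P x * Real.log (P x / ((1:ℝ)/2) ^ (c.enc x).length)
        = P x * Real.log (P x) + Real.log 2 * (P x * ((c.enc x).length : ℝ)) := by
      intro x hx
      have hb : ((1:ℝ)/2) ^ (c.enc x).length ≠ 0 := by positivity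
      rw [Real.log_div (hPpos x hx).ne' hb, Real.log_pow, one_div, Real.log_inv]
      ring
    rw [Finset.sum_congr rfl hterm, Finset.sum_add_distrib, ← Finset.mul_sum, ← hR, hblocklog]
  have hlogQ : (K : ℝ) * Real.log 2 ≤ - Real.log (QQ i) := by
    have h1' : Real.log (QQ i) ≤ Real.log (1/m) := Real.log_le_log hQpos hQi
    have h2' : Real.log ((1:ℝ)/m) = -(K * Real.log 2) := by
      rw [one_div, Real.log_inv]
      congr 1
      rw [hm]
      push_cast
      rw [Real.log_pow]
    linarith
  have hmain : (K:ℝ) * Real.log 2 ≤ n * E + Real.log 2 * R := by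
    calc (K:ℝ) * Real.log 2 ≤ - Real.log (QQ i) := hlogQ
      _ ≤ ∑ x ∈ T i, P x * Real.log (P x / ((1:ℝ)/2) ^ (c.enc x).length) := hgibbs
      _ = n * E + Real.log 2 * R := hexp
  set Hreal := ∑ a ∈ S i, -(q i a * Real.logb 2 (q i a)) with hHreal
  have hHrel : Hreal = -E / Real.log 2 := by
    rw [hHreal, hE, ← Finset.sum_neg_distrib, Finset.sum_div]
    refine Finset.sum_congr rfl fun a _ => ?_
    rw [← Real.log_div_log, div_eq_mul_inv]
    ring
  have hHnn : 0 ≤ Hreal := by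
    rw [hHreal]
    apply Finset.sum_nonneg
    intro a ha
    have h1' : q i a ≤ 1 := le_trans (hqf i a) (h1 a)
    have h2' := (hSpos i a ha).le
    have := Real.logb_nonpos one_lt_two h2' h1'
    nlinarith
  have hRnn : 0 ≤ R := by
    rw [hR]
    apply Finset.sum_nonneg
    intro x hx
    have := (hPpos x hx).le
    positivity
  have hRineq : (L:ℝ) + Hreal ≤ R / n := by
    have hEeq : E = -(Real.log 2 * Hreal) := by
      rw [hHrel]
      field_simp
    have hKL : (K:ℝ) = (n:ℝ) * (L:ℝ) := by rw [hK]; push_cast; ring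
    rw [hKL, hEeq] at hmain
    have hR' : (n:ℝ) * ((L:ℝ) + Hreal) ≤ R := by nlinarith
    rw [le_div_iff₀ hnR]
    linarith [hR']
  -- identify rate and entropy
  have hrate : rate n c (μm i) = ENNReal.ofReal (R / n) := by
    have hblock : ∀ x : Fin n → ℕ, blockP n (μm i) x = P x := fun x => rfl
    have htsum : ∑' x : Fin n → ℕ, ENNReal.ofReal (blockP n (μm i) x) * ((c.enc x).length : ℝ≥0∞)
        = ∑ x ∈ T i, ENNReal.ofReal (P x) * ((c.enc x).length : ℝ≥0∞) := by
      apply tsum_eq_sum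
      intro x hx
      rw [hblock x, hP0 x hx]
      simp
    have hterm : ∀ x ∈ T i, ENNReal.ofReal (P x) * ((c.enc x).length : ℝ≥0∞)
        = ENNReal.ofReal (P x * ((c.enc x).length : ℝ)) := by
      intro x hx
      rw [ENNReal.ofReal_mul (hPpos x hx).le, ENNReal.ofReal_natCast]
    rw [rate, htsum, Finset.sum_congr rfl hterm,
      ← ENNReal.ofReal_sum_of_nonneg (fun x hx => by
        have := (hPpos x hx).le
        positivity),
      ← hR, ENNReal.ofReal_div_of_pos hnR, ENNReal.ofReal_natCast]
  have hent : entropy (μm i) = ENNReal.ofReal Hreal := by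
    have hoff : ∀ a ∉ S i, ENNReal.ofReal (-((μm i).p a * Real.logb 2 ((μm i).p a))) = 0 := by
      intro a ha
      rw [hμp i, hqS i a ha]
      simp
    rw [entropy, entropyF, tsum_eq_sum hoff, hHreal,
      ENNReal.ofReal_sum_of_nonneg (fun a ha => by
        have h1' : q i a ≤ 1 := le_trans (hqf i a) (h1 a)
        have h2' := (hSpos i a ha).le
        have := Real.logb_nonpos one_lt_two h2' h1'
        nlinarith)]
  refine ⟨μm i, ?_⟩
  rw [iSup_pos (hμΛ i), hrate, hent]
  have hcoe1 : ((ENNReal.ofReal (R / n) : ℝ≥0∞) : EReal) = ((R / n : ℝ) : EReal) := by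
    rw [EReal.coe_ennreal_ofReal]
    congr 1
    exact max_eq_left (div_nonneg hRnn hnR.le)
  have hcoe2 : ((ENNReal.ofReal Hreal : ℝ≥0∞) : EReal) = ((Hreal : ℝ) : EReal) := by
    rw [EReal.coe_ennreal_ofReal]
    congr 1
    exact max_eq_left hHnn
  rw [hcoe1, hcoe2, ← EReal.coe_sub]
  refine lt_of_lt_of_le hbz (EReal.coe_le_coe_iff.2 ?_)
  have : (L:ℝ) ≤ R / n - Hreal := by linarith [hRineq]
  linarith [hzL]
end
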